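/- arXiv:1807.00291 — 3 statements merged into one kernel-verified Lean document; each statement's English description precedes it below -/
import Mathlib

section
/- Let R be a commutative noetherian ring with total quotient ring Q, and let M be an R-submodule of Q containing a non-zerodivisor of R. Then M = tr_R(M) (as subsets of Q) if and only if (M : M) = (R : M) (as subsets of Q). -/
/-!
A linear form `f : M → R` satisfies `f x · y = f y · x` in `Q`, so it is multiplication by
`f c / c` for the non-zerodivisor `c ∈ M`, and that fraction lies in `(R : M)`; conversely every
`q ∈ (R : M)` defines such a form. Hence `tr_R(M) = (R : M) M`. The equivalence
`(R : M) M = M ↔ (M : M) = (R : M)` is then arithmetic of submodules: if `(R : M) M = M`, then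
`(M : M) M = (R : M) (M : M) M ⊆ (R : M) M ⊆ R`; conversely `1 ∈ (M : M) = (R : M)` gives
`M ⊆ (R : M) M = (M : M) M ⊆ M`.
-/

universe u

open nonZeroDivisors

/-- The trace ideal of an `R`-module `M`. -/
def traceIdeal (R : Type*) [CommRing R] (M : Type*) [AddCommGroup M] [Module R M] :
    Ideal R :=
  Submodule.span R {r | ∃ (f : M →ₗ[R] R) (m : M), f m = r}

namespace Submodule

variable {R A : Type*} [CommSemiring R] [CommSemiring A] [Algebra R A]

theorem one_div_mul_eq_self_iff (M : Submodule R A) : 1 / M * M = M ↔ M / M = 1 / M := by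
  have hdiv : M / M * M ≤ M := le_div_iff_mul_le.mp le_rfl
  constructor
  · intro h
    refine le_antisymm (le_div_iff_mul_le.mpr ?_) (le_div_iff_mul_le.mpr h.le)
    calc M / M * M = 1 / M * (M / M * M) := by rw [mul_left_comm, h]
      _ ≤ 1 / M * M := by gcongr
      _ ≤ 1 := mul_comm M (1 / M) ▸ mul_one_div_le_one
  · intro h
    refine le_antisymm (h ▸ hdiv) ?_
    calc M = 1 * M := (one_mul M).symm
      _ ≤ 1 / M * M := by gcongr; exact h ▸ one_le.mpr (one_mem_div.mpr le_rfl)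

end Submodule

section Localization

variable {R S : Type*} [CommRing R] [CommRing S] [Algebra R S]

theorem IsLocalization.algebraMap_linearMap_apply_mul_comm (T : Submonoid R) [IsLocalization T S]
    {M : Submodule R S} (f : M →ₗ[R] R) (x y : M) :
    algebraMap R S (f x) * y = algebraMap R S (f y) * x := by
  obtain ⟨⟨a, s⟩, hx⟩ := IsLocalization.surj T (x : S)
  obtain ⟨⟨b, t⟩, hy⟩ := IsLocalization.surj T (y : S)
  have hM : (b * s) • x = (a * t) • y := by
    ext
    simp only [SetLike.val_smul, Algebra.smul_def, map_mul]
    linear_combination (algebraMap R S b) * hx - (algebraMap R S a) * hy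
  have hR := congrArg (algebraMap R S) (congrArg f hM)
  simp only [map_smul, smul_eq_mul, map_mul] at hR
  refine ((IsLocalization.map_units S s).mul (IsLocalization.map_units S t)).mul_left_cancel ?_
  linear_combination (algebraMap R S s * algebraMap R S (f x)) * hy -
    (algebraMap R S t * algebraMap R S (f y)) * hx + hR

theorem IsLocalization.exists_mem_one_div_algebraMap_linearMap_apply_eq_mul (T : Submonoid R)
    [IsLocalization T S] {M : Submodule R S} (f : M →ₗ[R] R) {u : M} (hu : IsUnit (u : S)) :
    ∃ q ∈ 1 / M, ∀ m : M, algebraMap R S (f m) = q * m := by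
  have hfm (m : M) : algebraMap R S (f m) = ↑hu.unit⁻¹ * algebraMap R S (f u) * m := by
    rw [mul_assoc, ← algebraMap_linearMap_apply_mul_comm T f m u, mul_left_comm,
      IsUnit.val_inv_mul, mul_one]
  refine ⟨_, Submodule.mem_div_iff_forall_mul_mem.mpr fun m hm ↦ ?_, hfm⟩
  exact Submodule.mem_one.mpr ⟨_, hfm ⟨m, hm⟩⟩

theorem Submodule.exists_linearMap_algebraMap_apply_eq_mul
    (hinj : Function.Injective (algebraMap R S)) {M : Submodule R S} {q : S} (hq : q ∈ 1 / M) :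
    ∃ f : M →ₗ[R] R, ∀ m : M, algebraMap R S (f m) = q * m := by
  have hrange (m : M) : q * m ∈ LinearMap.range (Algebra.linearMap R S) :=
    one_eq_range (R := R) (A := S) ▸ mem_div_iff_forall_mul_mem.mp hq m m.2
  let e := LinearEquiv.ofInjective (Algebra.linearMap R S) hinj
  refine ⟨e.symm.toLinearMap ∘ₗ ((LinearMap.mulLeft R q ∘ₗ M.subtype).codRestrict _ hrange),
    fun m ↦ ?_⟩
  show algebraMap R S (e.symm ⟨q * m, hrange m⟩) = q * m
  exact congrArg Subtype.val (e.apply_symm_apply ⟨q * m, hrange m⟩)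

theorem Submodule.map_traceIdeal_eq_one_div_mul {T : Submonoid R} (hT : T ≤ R⁰)
    [IsLocalization T S] {M : Submodule R S} (hM : ∃ u ∈ M, IsUnit u) :
    Submodule.map (Algebra.linearMap R S) (traceIdeal R M) = 1 / M * M := by
  obtain ⟨u, huM, hu⟩ := hM
  refine le_antisymm ?_ (mul_le.mpr fun q hq m hm ↦ ?_)
  · rw [traceIdeal, map_span, span_le]
    rintro _ ⟨_, ⟨f, m, rfl⟩, rfl⟩
    obtain ⟨q, hq, hfq⟩ :=
      IsLocalization.exists_mem_one_div_algebraMap_linearMap_apply_eq_mul T f (u := ⟨u, huM⟩) hu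
    rw [SetLike.mem_coe, Algebra.linearMap_apply, hfq]
    exact mul_mem_mul hq m.2
  · obtain ⟨f, hf⟩ := exists_linearMap_algebraMap_apply_eq_mul (IsLocalization.injective S hT) hq
    rw [← hf ⟨m, hm⟩, ← Algebra.linearMap_apply]
    exact mem_map_of_mem (subset_span ⟨f, _, rfl⟩)

end Localization

theorem self_trace_iff_colon_eq_general (R : Type u) [CommRing R]
    (M : Submodule R (FractionRing R))
    (h : ∃ c ∈ R⁰, algebraMap R (FractionRing R) c ∈ M) :
    Submodule.map (Algebra.linearMap R (FractionRing R)) (traceIdeal R M) = M ↔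
      M / M = 1 / M := by
  obtain ⟨c, hc, hcM⟩ := h
  rw [Submodule.map_traceIdeal_eq_one_div_mul le_rfl
    ⟨_, hcM, IsLocalization.map_units (FractionRing R) ⟨c, hc⟩⟩]
  exact M.one_div_mul_eq_self_iff

/-- For a submodule `M` of the total quotient ring containing a non-zerodivisor,
`M = tr_R(M)` in `Q` if and only if `(M : M) = (R : M)` in `Q`. -/
theorem self_trace_iff_colon_eq (R : Type u) [CommRing R] [IsNoetherianRing R]
    (M : Submodule R (FractionRing R))
    (h : ∃ c ∈ R⁰, algebraMap R (FractionRing R) c ∈ M) :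
    Submodule.map (Algebra.linearMap R (FractionRing R)) (traceIdeal R M) = M ↔
      M / M = 1 / M :=
  self_trace_iff_colon_eq_general R M h
end

section
/- A Dedekind domain R satisfies the Lindo–Pande condition (every ideal of R is isomorphic to a trace ideal of R) if and only if R is a principal ideal domain. -/
/-!
For a module `M`, every linear form on `tr M` again takes values in `tr M`, so `tr (tr M) ≤ tr M`.
In a Dedekind domain a nonzero ideal `I` is invertible, `I * J = (c)` with `c ≠ 0`, and the forms
`a ↦ a b / c` (`b ∈ J`) show `tr I = R`. Hence the only nonzero trace ideal is `R` itself: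
under the Lindo–Pande condition every nonzero ideal is isomorphic to `R`, i.e. principal.
Conversely, in a PID every ideal is `0 = tr 0` or isomorphic to `R = tr R`.
-/

universe u

/-- An ideal is a trace ideal if it is the trace of some module. -/
def IsTraceIdeal {R : Type u} [CommRing R] (I : Ideal R) : Prop :=
  ∃ (M : Type u) (_ : AddCommGroup M) (_ : Module R M), I = traceIdeal R M

/-- The Lindo–Pande condition: every ideal is isomorphic to a trace ideal. -/
def LP (R : Type u) [CommRing R] : Prop :=
  ∀ I : Ideal R, ∃ J : Ideal R, IsTraceIdeal J ∧ Nonempty (I ≃ₗ[R] J)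

lemma Submodule.isPrincipal_of_linearEquiv {R M : Type*} [CommRing R] [AddCommGroup M]
    [Module R M] {N : Submodule R M} (e : R ≃ₗ[R] N) : N.IsPrincipal := by
  refine ⟨(e 1 : M), ?_⟩
  have he : N.subtype ∘ₗ e.toLinearMap = LinearMap.toSpanSingleton R M (e 1) :=
    LinearMap.ext_ring (by simp)
  rw [LinearMap.span_singleton_eq_range, ← he, LinearEquiv.range_comp, Submodule.range_subtype]

section traceIdeal

variable {R : Type*} [CommRing R] {M : Type*} [AddCommGroup M] [Module R M]

lemma mem_traceIdeal (f : M →ₗ[R] R) (m : M) : f m ∈ traceIdeal R M :=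
  Submodule.subset_span ⟨f, m, rfl⟩

lemma traceIdeal_eq_bot_of_subsingleton [Subsingleton M] : traceIdeal R M = ⊥ := by
  refine eq_bot_iff.mpr (Submodule.span_le.mpr ?_)
  rintro _ ⟨f, m, rfl⟩
  simp [Subsingleton.elim m 0]

variable (R) in
lemma traceIdeal_self : traceIdeal R R = ⊤ :=
  (Ideal.eq_top_iff_one _).mpr (mem_traceIdeal (M := R) LinearMap.id 1)

lemma traceIdeal_traceIdeal_le : traceIdeal R (traceIdeal R M) ≤ traceIdeal R M := by
  refine Submodule.span_le.mpr ?_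
  rintro _ ⟨f, x, rfl⟩
  suffices Submodule.comap f (traceIdeal R M) = ⊤ from (this ▸ Submodule.mem_top : x ∈ _)
  refine eq_top_iff.mpr (Submodule.span_span_coe_preimage.ge.trans (Submodule.span_le.mpr ?_))
  rintro ⟨_, _⟩ ⟨g, m, rfl⟩
  exact mem_traceIdeal (f ∘ₗ g.codRestrict _ (mem_traceIdeal g)) m

end traceIdeal

section invertible

variable {R : Type*} [CommRing R]

lemma traceIdeal_eq_top_of_mul_eq_span_singleton [IsDomain R] {I J : Ideal R} {c : R}
    (hc : c ≠ 0) (hIJ : I * J = Ideal.span {c}) : traceIdeal R I = ⊤ := by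
  let e := LinearEquiv.toSpanNonzeroSingleton R R c hc
  have hmul : I * J ≤ Ideal.span {c} * traceIdeal R I := by
    refine Ideal.mul_le.mpr fun a ha b hb => ?_
    have hb' : ∀ a' : I, (a' : R) * b ∈ Ideal.span {c} :=
      fun a' => hIJ ▸ Ideal.mul_mem_mul a'.2 hb
    let f : I →ₗ[R] R :=
      e.symm.toLinearMap ∘ₗ (LinearMap.mulRight R b ∘ₗ I.subtype).codRestrict _ hb'
    have hf : c * f ⟨a, ha⟩ = a * b := by
      rw [mul_comm, ← smul_eq_mul]
      exact LinearEquiv.toSpanNonzeroSingleton_symm_apply_smul R R c hc _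
    exact hf ▸ Ideal.mem_span_singleton_mul.mpr ⟨_, mem_traceIdeal f _, rfl⟩
  obtain ⟨t, ht, hct⟩ := Ideal.mem_span_singleton_mul.mp
    (hmul (hIJ ▸ Ideal.mem_span_singleton_self c))
  have ht1 : t = 1 := mul_left_cancel₀ hc (hct.trans (mul_one c).symm)
  exact (Ideal.eq_top_iff_one _).mpr (ht1 ▸ ht)

lemma traceIdeal_eq_top_of_ne_bot [IsDedekindDomain R] {I : Ideal R} (hI : I ≠ ⊥) :
    traceIdeal R I = ⊤ := by
  obtain ⟨c, hcI, hc⟩ := Submodule.exists_mem_ne_zero_of_ne_bot hI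
  obtain ⟨J, hJ⟩ := Ideal.dvd_iff_le.mpr ((Ideal.span_singleton_le_iff_mem I).mpr hcI)
  exact traceIdeal_eq_top_of_mul_eq_span_singleton hc hJ.symm

end invertible

section IsTraceIdeal

variable {R : Type u} [CommRing R]

lemma isTraceIdeal_bot : IsTraceIdeal (⊥ : Ideal R) :=
  ⟨PUnit, inferInstance, inferInstance, traceIdeal_eq_bot_of_subsingleton.symm⟩

lemma isTraceIdeal_top : IsTraceIdeal (⊤ : Ideal R) :=
  ⟨R, inferInstance, inferInstance, (traceIdeal_self R).symm⟩

lemma IsTraceIdeal.eq_top_of_ne_bot [IsDedekindDomain R] {J : Ideal R} (hJ : IsTraceIdeal J)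
    (hJ_ne : J ≠ ⊥) : J = ⊤ := by
  obtain ⟨M, _, _, rfl⟩ := hJ
  exact top_le_iff.mp (traceIdeal_eq_top_of_ne_bot hJ_ne ▸ traceIdeal_traceIdeal_le)

end IsTraceIdeal

theorem dedekind_LP_iff_pid_general (R : Type u) [CommRing R] [IsDedekindDomain R] :
    LP R ↔ IsPrincipalIdealRing R := by
  refine ⟨fun hLP => ⟨fun I => ?_⟩, fun hPID I => ?_⟩
  · by_cases hI : I = ⊥
    · exact hI ▸ bot_isPrincipal
    obtain ⟨J, hJ, ⟨e⟩⟩ := hLP I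
    have hJ_ne : J ≠ ⊥ := fun hJ_bot => hI <| Submodule.subsingleton_iff_eq_bot.mp <|
      e.toEquiv.subsingleton_congr.mpr (Submodule.subsingleton_iff_eq_bot.mpr hJ_bot)
    rw [hJ.eq_top_of_ne_bot hJ_ne] at e
    exact Submodule.isPrincipal_of_linearEquiv (Submodule.topEquiv.symm ≪≫ₗ e.symm)
  · by_cases hI : I = ⊥
    · exact ⟨⊥, isTraceIdeal_bot, ⟨LinearEquiv.ofEq _ _ hI⟩⟩
    obtain ⟨a, rfl⟩ := hPID.principal I
    have ha : a ≠ 0 := fun h => hI (by simp [h])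
    exact ⟨⊤, isTraceIdeal_top,
      ⟨(LinearEquiv.toSpanNonzeroSingleton R R a ha).symm ≪≫ₗ Submodule.topEquiv.symm⟩⟩

/-- A Dedekind domain satisfies the Lindo–Pande condition iff it is a PID. -/
theorem dedekind_LP_iff_pid (R : Type u) [CommRing R] [IsDomain R] [IsDedekindDomain R] :
    LP R ↔ IsPrincipalIdealRing R :=
  dedekind_LP_iff_pid_general R
end

section
/- Let (R,m,k) be a commutative noetherian local ring of depth 1 satisfying: every ideal of R is isomorphic to a trace ideal. If m is not isomorphic to R (i.e., R is not a discrete valuation ring), then m = tr_R(m), the ring S = m : m (colon in the total quotient ring) strictly contains R, and m is generated by at most two elements. -/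
universe u

open nonZeroDivisors IsLocalRing
open IsLocalRing

/-- The depth of a noetherian local ring: the supremum of lengths of regular
sequences contained in the maximal ideal. -/
noncomputable def ringDepth (R : Type*) [CommRing R] [IsLocalRing R] : ℕ :=
  sSup {n | ∃ rs : List R, rs.length = n ∧ (∀ r ∈ rs, r ∈ maximalIdeal R) ∧
    RingTheory.Sequence.IsRegular R rs}

/-- The embedding dimension of a local ring: the dimension of `m/m²` over the
residue field. -/
noncomputable def embDim (R : Type*) [CommRing R] [IsLocalRing R] : ℕ :=
  Module.finrank (ResidueField R) (CotangentSpace R)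

/-- The length of a module, as the longest chain of submodules (a natural number;
`0` if infinite). -/
noncomputable def lengthNat (R M : Type*) [CommRing R] [AddCommGroup M] [Module R M] : ℕ :=
  (WithBot.unbotD 0 (Order.krullDim (Submodule R M))).toNat

/-- `e` is the Hilbert–Samuel multiplicity of a (one-dimensional) local ring `R`:
`e = lim_{n→∞} ℓ(R/m^{n+1})/n`. -/
def HasMultiplicity (R : Type*) [CommRing R] [IsLocalRing R] (e : ℝ) : Prop :=
  Filter.Tendsto
    (fun n : ℕ => (lengthNat R (R ⧸ (maximalIdeal R) ^ (n + 1)) : ℝ) / (n + 1))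
    Filter.atTop (nhds e)

/-!
Depth one gives a non-zero-divisor `x ∈ 𝔪` and `y ∉ (x)` with `y𝔪 ⊆ (x)`, since `𝔪` is an
associated prime of `R/(x)`. As `𝔪 ≇ R`, no `f : 𝔪 → R` takes a unit value, so `tr 𝔪 = 𝔪`.
A trace ideal `J` satisfies `R : J = J : J`; hence `y/x ∈ (𝔪 : 𝔪) \ R`, and `y ∈ B = (x𝔪 :_R 𝔪)`.
The Lindo–Pande condition gives trace ideals `J ≅ B` and `J' ≅ (x, y)`. Neither is `R`, because
no principal ideal inside `B` contains `x` and `y`; using `R : J = J : J` once more one finds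
`J = 𝔪` and `B ⊆ (x, y)`. So `𝔪 ≅ B = (x, y)` is two-generated.
-/

namespace Ideal

variable {R : Type*} [CommRing R]

theorem smul_linearMap_apply_comm {M : Type*} [AddCommGroup M] [Module R M] {I : Ideal R}
    (f : I →ₗ[R] M) (a b : I) : (a : R) • f b = (b : R) • f a := by
  rw [← map_smul, ← map_smul]
  congr 1
  ext
  exact mul_comm _ _

theorem mul_linearMap_apply_comm {I J : Ideal R} (f : I →ₗ[R] J) (a b : I) :
    (a : R) * f b = (b : R) * f a :=
  congrArg Subtype.val (smul_linearMap_apply_comm f a b)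

theorem eq_span_singleton_of_isUnit_apply {I : Ideal R} (f : I →ₗ[R] R) (z : I)
    (hz : IsUnit (f z)) : I = span {(z : R)} := by
  refine le_antisymm (fun a ha ↦ mem_span_singleton'.mpr ⟨f ⟨a, ha⟩ * hz.unit⁻¹, ?_⟩)
    (span_le.mpr (Set.singleton_subset_iff.mpr z.2))
  have := smul_linearMap_apply_comm f ⟨a, ha⟩ z
  simp only [smul_eq_mul] at this
  rw [mul_right_comm, mul_comm _ (z : R), ← this, mul_assoc, hz.mul_val_inv, mul_one]

theorem linearEquiv_apply_mem_nonZeroDivisors {I J : Ideal R} (φ : I ≃ₗ[R] J) {a : I}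
    (ha : (a : R) ∈ R⁰) : (φ a : R) ∈ R⁰ := by
  refine mem_nonZeroDivisors_iff_right.mpr fun t ht ↦ ?_
  have : φ (t • a) = 0 := by
    rw [map_smul]
    exact Subtype.ext ht
  exact mem_nonZeroDivisors_iff_right.mp ha t (congrArg Subtype.val (φ.map_eq_zero_iff.mp this))

theorem isPrincipal_of_linearEquiv {I : Ideal R} (φ : I ≃ₗ[R] R) : I.IsPrincipal := by
  refine ⟨φ.symm 1, le_antisymm (fun b hb ↦ mem_span_singleton'.mpr ⟨φ ⟨b, hb⟩, ?_⟩) ?_⟩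
  · have := congrArg Subtype.val (φ.symm_apply_apply ⟨b, hb⟩)
    rwa [← mul_one (φ ⟨b, hb⟩), ← smul_eq_mul, map_smul] at this
  · exact span_le.mpr (Set.singleton_subset_iff.mpr (φ.symm 1).2)

theorem exists_eq_span_pair_of_linearEquiv {I J : Ideal R} (φ : I ≃ₗ[R] J) {a b : R}
    (hI : I = span {a, b}) : ∃ a' b' : R, J = span {a', b'} := by
  subst hI
  refine ⟨φ ⟨a, Submodule.subset_span (by simp)⟩, φ ⟨b, Submodule.subset_span (by simp)⟩,
    le_antisymm (fun j hj ↦ ?_) (span_le.mpr ?_)⟩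
  · obtain ⟨⟨i, hi⟩, hij⟩ := φ.surjective ⟨j, hj⟩
    obtain rfl : (φ ⟨i, hi⟩ : R) = j := congrArg Subtype.val hij
    obtain ⟨α, β, rfl⟩ := mem_span_pair.mp hi
    refine mem_span_pair.mpr ⟨α, β, ?_⟩
    rw [show (⟨α * a + β * b, hi⟩ : span {a, b}) = α • ⟨a, _⟩ + β • ⟨b, _⟩ from rfl,
      map_add, map_smul, map_smul]
    rfl
  · rintro _ (rfl | rfl) <;> exact Subtype.mem _

variable {d : R}

noncomputable def spanSingletonEquiv (hd : d ∈ R⁰) : R ≃ₗ[R] span {d} :=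
  (LinearEquiv.ofInjective (LinearMap.toSpanSingleton R R d)
    fun _ _ h ↦ (mul_cancel_right_mem_nonZeroDivisors hd).mp h).trans
    (LinearEquiv.ofEq _ _ (LinearMap.span_singleton_eq_range R R d).symm)

@[simp]
theorem coe_spanSingletonEquiv_apply (hd : d ∈ R⁰) (r : R) :
    (spanSingletonEquiv hd r : R) = r * d :=
  rfl

end Ideal

section Trace

variable {R : Type u} [CommRing R]

theorem le_traceIdeal (I : Ideal R) : I ≤ traceIdeal R I :=
  fun a ha ↦ Submodule.subset_span ⟨I.subtype, ⟨a, ha⟩, rfl⟩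

theorem apply_mem_traceIdeal {M : Type*} [AddCommGroup M] [Module R M]
    (g : traceIdeal R M →ₗ[R] R) (y : traceIdeal R M) : g y ∈ traceIdeal R M := by
  obtain ⟨y, hy⟩ := y
  induction hy using Submodule.span_induction with
  | mem r hr =>
    obtain ⟨f, m, rfl⟩ := hr
    exact Submodule.subset_span
      ⟨g ∘ₗ f.codRestrict _ fun m ↦ Submodule.subset_span ⟨f, m, rfl⟩, m, rfl⟩
  | zero =>
    show g 0 ∈ _
    rw [map_zero]
    exact zero_mem _
  | add a b ha hb iha ihb =>
    show g (⟨a, ha⟩ + ⟨b, hb⟩) ∈ _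
    rw [map_add]
    exact add_mem iha ihb
  | smul t a ha iha =>
    show g (t • ⟨a, ha⟩) ∈ _
    rw [map_smul]
    exact Submodule.smul_mem _ t iha

/-- In fractional terms: `R : J = J : J` for a trace ideal `J`. -/
theorem IsTraceIdeal.span_singleton_mul_le {J : Ideal R} (hJ : IsTraceIdeal J) {d r : R}
    (hd : d ∈ R⁰) (h : Ideal.span {r} * J ≤ Ideal.span {d}) :
    Ideal.span {r} * J ≤ Ideal.span {d} * J := by
  obtain ⟨M, _, _, rfl⟩ := hJ
  let g : traceIdeal R M →ₗ[R] R := (Ideal.spanSingletonEquiv hd).symm.toLinearMap ∘ₗ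
    (r • (traceIdeal R M).subtype).codRestrict _
      fun j ↦ Ideal.span_singleton_mul_le_iff.mp h j j.2
  refine Ideal.span_singleton_mul_le_iff.mpr fun j hj ↦ Ideal.mem_span_singleton_mul.mpr
    ⟨g ⟨j, hj⟩, apply_mem_traceIdeal g _, ?_⟩
  have := congrArg Subtype.val ((Ideal.spanSingletonEquiv hd).apply_symm_apply
    ⟨r * j, Ideal.span_singleton_mul_le_iff.mp h j hj⟩)
  rw [Ideal.coe_spanSingletonEquiv_apply] at this
  rw [mul_comm]
  exact this

theorem traceIdeal_maximalIdeal_eq [IsLocalRing R] {x : R} (hxm : x ∈ maximalIdeal R)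
    (hx : x ∈ R⁰) (h : ¬ Nonempty ((maximalIdeal R) ≃ₗ[R] R)) :
    traceIdeal R (maximalIdeal R) = maximalIdeal R := by
  refine le_antisymm (Submodule.span_le.mpr ?_) (le_traceIdeal _)
  rintro _ ⟨f, z, rfl⟩
  by_contra hfz
  have hm := Ideal.eq_span_singleton_of_isUnit_apply f z
    (by simpa [mem_maximalIdeal, mem_nonunits_iff] using hfz)
  obtain ⟨s, rfl⟩ := Ideal.mem_span_singleton'.mp (hm ▸ hxm)
  exact h ⟨(LinearEquiv.ofEq _ _ hm).trans
    (Ideal.spanSingletonEquiv (mul_mem_nonZeroDivisors.mp hx).2).symm⟩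

end Trace

section Depth

open scoped Pointwise

variable {R : Type*} [CommRing R] [IsLocalRing R]

theorem maximalIdeal_mem_associatedPrimes [IsNoetherianRing R] {M : Type*} [AddCommGroup M]
    [Module R M] [Module.Finite R M] (h : ∀ z ∈ maximalIdeal R, ¬ IsSMulRegular M z) :
    maximalIdeal R ∈ associatedPrimes R M := by
  refine (Ideal.subset_iUnion_iff_mem_of_isMaximal_of_finite (associatedPrimes.finite R M) ⊥ ⊥
    (fun I hI _ _ ↦ hI.isPrime) bot_ne_top bot_ne_top).mp ?_
  rw [biUnion_associatedPrimes_eq_zero_divisors]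
  intro z hz
  obtain ⟨m, hzm, hm⟩ :=
    not_forall₂.mp (mt isSMulRegular_iff_right_eq_zero_of_smul.mpr (h z hz))
  exact ⟨m, hm, hzm⟩

theorem exists_isSMulRegular_of_ringDepth_eq_one (h : ringDepth R = 1) :
    ∃ x ∈ maximalIdeal R, IsSMulRegular R x ∧
      ∀ z ∈ maximalIdeal R, ¬ IsSMulRegular (QuotSMulTop x R) z := by
  set S : Set ℕ := {n | ∃ rs : List R, rs.length = n ∧ (∀ r ∈ rs, r ∈ maximalIdeal R) ∧
    RingTheory.Sequence.IsRegular R rs}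
  have hS : sSup S = 1 := h
  have hbdd : BddAbove S := by
    by_contra hb
    rw [csSup_of_not_bddAbove hb, csSup_empty] at hS
    exact zero_ne_one hS
  have h0 : 0 ∈ S := ⟨[], rfl, by simp, .nil R R⟩
  obtain ⟨rs, hlen, hmem, hreg⟩ : 1 ∈ S := hS ▸ Nat.sSup_mem ⟨0, h0⟩ hbdd
  obtain ⟨x, rfl⟩ := List.length_eq_one_iff.mp hlen
  have hx : IsSMulRegular R x := ((RingTheory.Sequence.isRegular_cons_iff R x []).mp hreg).1
  have hxm : x ∈ maximalIdeal R := hmem x (List.mem_singleton_self x)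
  refine ⟨x, hxm, hx, fun z hz hz' ↦ ?_⟩
  have hmem' : ∀ r ∈ [x, z], r ∈ maximalIdeal R := by
    rintro r (_ | ⟨_, _ | ⟨_, h⟩⟩)
    exacts [hxm, hz, absurd h List.not_mem_nil]
  have h2 : 2 ∈ S := ⟨[x, z], rfl, hmem',
    .of_isWeaklyRegular_of_mem_maximalIdeal R hmem'
      ((RingTheory.Sequence.isWeaklyRegular_cons_iff R x [z]).mpr
        ⟨hx, (RingTheory.Sequence.isWeaklyRegular_singleton_iff _ z).mpr hz'⟩)⟩
  have := le_csSup hbdd h2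
  omega

theorem exists_socle_of_ringDepth_eq_one [IsNoetherianRing R] (h : ringDepth R = 1) :
    ∃ x ∈ maximalIdeal R, x ∈ R⁰ ∧
      ∃ y ∉ Ideal.span {x}, Ideal.span {y} * maximalIdeal R ≤ Ideal.span {x} := by
  obtain ⟨x, hxm, hx, hzd⟩ := exists_isSMulRegular_of_ringDepth_eq_one h
  obtain ⟨-, q, hm⟩ := isAssociatedPrime_iff.mp (maximalIdeal_mem_associatedPrimes hzd)
  obtain ⟨y, rfl⟩ := Submodule.mkQ_surjective _ q
  have hsocle : ∀ r, r * y ∈ Ideal.span {x} ↔ r ∈ maximalIdeal R := by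
    intro r
    rw [hm, Submodule.mem_colon_singleton, Submodule.mem_bot, Submodule.mkQ_apply,
      ← Submodule.Quotient.mk_smul, Submodule.Quotient.mk_eq_zero,
      ← Submodule.ideal_span_singleton_smul, Ideal.smul_eq_mul, Ideal.mul_top, smul_eq_mul]
  refine ⟨x, hxm, ?_, y, fun hy ↦ ?_, Ideal.span_singleton_mul_le_iff.mpr fun z hz ↦ ?_⟩
  · exact mem_nonZeroDivisors_iff_right.mpr fun t ht ↦
      hx.right_eq_zero_of_smul (by rw [smul_eq_mul, mul_comm, ht])
  · exact (maximalIdeal.isMaximal R).ne_top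
      ((Ideal.eq_top_iff_one _).mpr ((hsocle 1).mp (by simpa using hy)))
  · rw [mul_comm]; exact (hsocle z).mpr hz

end Depth

theorem one_lt_map_div_map {R K : Type*} [CommRing R] [CommRing K] [Algebra R K]
    [IsFractionRing R K] {I : Ideal R} {x y : R} (hx : x ∈ R⁰) (hy : y ∉ Ideal.span {x})
    (hyI : Ideal.span {y} * I ≤ Ideal.span {x} * I) :
    (1 : Submodule R K) <
      Submodule.map (Algebra.linearMap R K) I / Submodule.map (Algebra.linearMap R K) I := by
  refine SetLike.lt_iff_le_and_exists.mpr ⟨Submodule.one_le.mpr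
    (Submodule.mem_div_iff_forall_mul_mem.mpr fun z hz ↦ by rwa [one_mul]),
    IsLocalization.mk' K y ⟨x, hx⟩, Submodule.mem_div_iff_forall_mul_mem.mpr ?_, ?_⟩
  · rintro _ ⟨z, hz, rfl⟩
    obtain ⟨w, hw, hxw⟩ := Ideal.mem_span_singleton_mul.mp
      (Ideal.span_singleton_mul_le_iff.mp hyI z hz)
    refine ⟨w, hw, ?_⟩
    rw [Algebra.linearMap_apply, Algebra.linearMap_apply, mul_comm,
      IsLocalization.mul_mk'_eq_mk'_of_mul, eq_comm, IsLocalization.mk'_eq_iff_eq_mul, ← map_mul,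
      mul_comm z, ← hxw, mul_comm]
  · intro h
    obtain ⟨r, hr⟩ := Submodule.mem_one.mp h
    rw [IsLocalization.eq_mk'_iff_mul_eq, ← map_mul] at hr
    exact hy (Ideal.mem_span_singleton'.mpr ⟨r, IsFractionRing.injective R K hr⟩)

section MulMaximalIdealColon

variable {R : Type u} [CommRing R] [IsLocalRing R] {x y : R}

open Ideal

/-- `(x𝔪 :_R 𝔪) = x S ∩ R`, where `S = 𝔪 : 𝔪`. -/
def mulMaximalIdealColon (x : R) : Ideal R :=
  (span {x} * maximalIdeal R).colon (maximalIdeal R : Set R)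

theorem mem_mulMaximalIdealColon {b : R} :
    b ∈ mulMaximalIdealColon x ↔ span {b} * maximalIdeal R ≤ span {x} * maximalIdeal R :=
  Submodule.mem_colon.trans span_singleton_mul_le_iff.symm

theorem self_mem_mulMaximalIdealColon (x : R) : x ∈ mulMaximalIdealColon x :=
  mem_mulMaximalIdealColon.mpr le_rfl

theorem notMem_mulMaximalIdealColon (hx : x ∈ R⁰) (hy : y ∉ span {x}) {d : R}
    (hxd : x ∈ span {d}) (hyd : y ∈ span {d}) : d ∉ mulMaximalIdealColon x := by
  intro hd
  obtain ⟨s, hs⟩ := mem_span_singleton'.mp hxd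
  by_cases hsm : s ∈ maximalIdeal R
  · obtain ⟨w, hw, hxw⟩ := mem_span_singleton_mul.mp
      (span_singleton_mul_le_iff.mp (mem_mulMaximalIdealColon.mp hd) s hsm)
    have hw1 : w = 1 := (mul_cancel_left_mem_nonZeroDivisors hx).mp
      (by rw [hxw, mul_one, mul_comm, hs])
    exact (maximalIdeal.isMaximal R).ne_top ((eq_top_iff_one _).mpr (hw1 ▸ hw))
  · have hsu : IsUnit s := by simpa [mem_maximalIdeal, mem_nonunits_iff] using hsm
    obtain ⟨t, rfl⟩ := mem_span_singleton'.mp hyd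
    refine hy (mem_span_singleton'.mpr ⟨t * hsu.unit⁻¹, ?_⟩)
    rw [← hs, mul_assoc t, ← mul_assoc _ s, hsu.val_inv_mul, one_mul]

theorem le_maximalIdeal_of_linearEquiv_of_le_mulMaximalIdealColon (hx : x ∈ R⁰)
    (hy : y ∉ span {x}) {I J : Ideal R} (hxI : x ∈ I) (hyI : y ∈ I)
    (hIB : I ≤ mulMaximalIdealColon x) (φ : I ≃ₗ[R] J) :
    J ≤ maximalIdeal R := by
  refine le_maximalIdeal fun hJ ↦ ?_
  subst hJ
  obtain ⟨d, rfl⟩ := (isPrincipal_of_linearEquiv (φ.trans (LinearEquiv.ofTop ⊤ rfl))).principal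
  exact notMem_mulMaximalIdealColon hx hy hxI hyI (hIB (mem_span_singleton_self d))

theorem eq_maximalIdeal_of_linearEquiv_mulMaximalIdealColon (hx : x ∈ R⁰) (hy : y ∉ span {x})
    (hyB : y ∈ mulMaximalIdealColon x) {J : Ideal R} (hJ : IsTraceIdeal J)
    (φ : mulMaximalIdealColon x ≃ₗ[R] J) : J = maximalIdeal R := by
  have hxB := self_mem_mulMaximalIdealColon x
  refine le_antisymm
    (le_maximalIdeal_of_linearEquiv_of_le_mulMaximalIdealColon hx hy hxB hyB le_rfl φ)
    fun z hz ↦ ?_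
  set c : J := φ ⟨x, hxB⟩
  have hc : (c : R) ∈ R⁰ := linearEquiv_apply_mem_nonZeroDivisors φ hx
  have hzJ : span {z} * J ≤ span {(c : R)} := by
    refine span_singleton_mul_le_iff.mpr fun j hj ↦ ?_
    obtain ⟨b, hb⟩ := φ.surjective ⟨j, hj⟩
    obtain ⟨w, -, hw⟩ := mem_span_singleton_mul.mp
      (span_singleton_mul_le_iff.mp (mem_mulMaximalIdealColon.mp b.2) z hz)
    have hxb := mul_linearMap_apply_comm φ.toLinearMap ⟨x, hxB⟩ b
    refine mem_span_singleton'.mpr ⟨w, (mul_cancel_left_mem_nonZeroDivisors hx).mp ?_⟩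
    simp only [LinearEquiv.coe_coe, hb] at hxb
    rw [← mul_assoc, hw, mul_left_comm, hxb]
    ring
  obtain ⟨a, ha, hca⟩ := mem_span_singleton_mul.mp
    (span_singleton_mul_le_iff.mp (hJ.span_singleton_mul_le hc hzJ) c c.2)
  rwa [← (mul_cancel_left_mem_nonZeroDivisors hc).mp (hca.trans (mul_comm z c))]

theorem mulMaximalIdealColon_le_of_linearEquiv (hx : x ∈ R⁰) {I J : Ideal R} (hxI : x ∈ I)
    (hJ : IsTraceIdeal J) (hJm : J ≤ maximalIdeal R) (ψ : I ≃ₗ[R] J) :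
    mulMaximalIdealColon x ≤ I := by
  intro b hb
  set c : J := ψ ⟨x, hxI⟩
  have hc : (c : R) ∈ R⁰ := linearEquiv_apply_mem_nonZeroDivisors ψ hx
  have hbJ : span {b} * J ≤ span {x} :=
    ((mul_mono_right hJm).trans (mem_mulMaximalIdealColon.mp hb)).trans mul_le_left
  obtain ⟨a, ha, hxa⟩ := mem_span_singleton_mul.mp
    (span_singleton_mul_le_iff.mp (hJ.span_singleton_mul_le hx hbJ) c c.2)
  obtain ⟨i, hi⟩ := ψ.surjective ⟨a, ha⟩
  have hxi := mul_linearMap_apply_comm ψ.toLinearMap ⟨x, hxI⟩ i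
  simp only [LinearEquiv.coe_coe, hi] at hxi
  obtain rfl : (i : R) = b :=
    (mul_cancel_right_mem_nonZeroDivisors hc).mp (by rw [← hxi, hxa])
  exact i.2

end MulMaximalIdealColon

/-- For a depth-one noetherian local ring satisfying the Lindo–Pande condition whose
maximal ideal is not free, one has `m = tr(m)`, the ring `S = m : m` (colon in the total
quotient ring) strictly contains `R`, and `m` is two-generated. -/
theorem depth_one_LP_structure (R : Type u) [CommRing R] [IsNoetherianRing R]
    [IsLocalRing R] (hdepth : ringDepth R = 1) (hlp : LP R)
    (h : ¬ Nonempty ((maximalIdeal R) ≃ₗ[R] R)) :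
    traceIdeal R (maximalIdeal R) = maximalIdeal R ∧
      (1 : Submodule R (FractionRing R)) <
        (Submodule.map (Algebra.linearMap R (FractionRing R)) (maximalIdeal R)) /
          (Submodule.map (Algebra.linearMap R (FractionRing R)) (maximalIdeal R)) ∧
      ∃ a b : R, maximalIdeal R = Ideal.span {a, b} := by
  obtain ⟨x, hxm, hx, y, hy, hym⟩ := exists_socle_of_ringDepth_eq_one hdepth
  have htr := traceIdeal_maximalIdeal_eq hxm hx h
  have hyB : y ∈ mulMaximalIdealColon x := mem_mulMaximalIdealColon.mpr
    (IsTraceIdeal.span_singleton_mul_le ⟨_, _, _, htr.symm⟩ hx hym)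
  refine ⟨htr, one_lt_map_div_map hx hy (mem_mulMaximalIdealColon.mp hyB), ?_⟩
  have hxI : x ∈ Ideal.span {x, y} := Ideal.subset_span (Set.mem_insert x _)
  have hyI : y ∈ Ideal.span {x, y} := Ideal.subset_span (Set.mem_insert_of_mem x rfl)
  have hIB : Ideal.span {x, y} ≤ mulMaximalIdealColon x :=
    Ideal.span_le.mpr (Set.insert_subset (self_mem_mulMaximalIdealColon x)
      (Set.singleton_subset_iff.mpr hyB))
  obtain ⟨J, hJ, ⟨φ⟩⟩ := hlp (mulMaximalIdealColon x)
  obtain ⟨J', hJ', ⟨ψ⟩⟩ := hlp (Ideal.span {x, y})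
  have hB : mulMaximalIdealColon x = Ideal.span {x, y} :=
    le_antisymm (mulMaximalIdealColon_le_of_linearEquiv hx hxI hJ'
      (le_maximalIdeal_of_linearEquiv_of_le_mulMaximalIdealColon hx hy hxI hyI hIB ψ) ψ) hIB
  rw [← eq_maximalIdeal_of_linearEquiv_mulMaximalIdealColon hx hy hyB hJ φ]
  exact Ideal.exists_eq_span_pair_of_linearEquiv φ hB
end
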